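/- Under the general EMOT setting with the growth/continuity assumption, suppose P(ĉ) < +∞ for some ĉ ∈ B_{0:T}. Then for every c ∈ C_{0:T} one has P(c) = min { λ(c) + P*(λ) : λ ∈ (C_{0:T})*, λ ≥ 0, λ(1) = 1 }, where (C_{0:T})* is the topological dual of the normed space (C_{0:T}, ‖·‖_{0:T}), λ ≥ 0 means λ(φ) ≥ 0 whenever φ ≥ 0 on Ω, and P*(λ) := sup_{c' ∈ C_{0:T}} ( P(c') − λ(c') ); in particular the minimum is attained. -/

import Mathlib

open MeasureTheory Filter Topology
open scoped ENNReal BigOperators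

noncomputable section

namespace EMOT

/-- The nonnegative part of an extended real number, as an element of `ℝ≥0∞`. -/
def posPart (a : EReal) : ℝ≥0∞ := if a = ⊤ then ⊤ else ENNReal.ofReal a.toReal

/-- The (possibly infinite) integral of an `EReal`-valued function, defined as the
difference of the lower integrals of its positive and negative parts. -/
def eInt {X : Type} [MeasurableSpace X] (μ : Measure X) (f : X → EReal) : EReal :=
  ((∫⁻ x, posPart (f x) ∂μ : ℝ≥0∞) : EReal) - ((∫⁻ x, posPart (-(f x)) ∂μ : ℝ≥0∞) : EReal)

variable {T d : ℕ}

/-- The path space `Ω = ∏_{t=0}^T ∏_{j=1}^d K_t^j`. -/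
abbrev PathSpace (K : Fin (T + 1) → Fin d → Set ℝ) : Type :=
  { x : Fin (T + 1) → Fin d → ℝ // ∀ t j, x t j ∈ K t j }

variable (K : Fin (T + 1) → Fin d → Set ℝ)

/-- The weight `Σ_{t,j} |x_t^j|`. -/
def wt (x : PathSpace K) : ℝ := ∑ t, ∑ j, |x.1 t j|

/-- The partial weight `Σ_{s ≤ t, j} |x_s^j|`. -/
def wtTo (t : Fin (T + 1)) (x : PathSpace K) : ℝ :=
  ∑ s ∈ Finset.univ.filter (fun s => s ≤ t), ∑ j, |x.1 s j|

/-- Membership in `C_{0:T}`: continuous with linear growth. -/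
def memC (φ : PathSpace K → ℝ) : Prop :=
  Continuous φ ∧ ∃ M : ℝ, ∀ x, |φ x| ≤ M * (1 + wt K x)

/-- Membership in `B_{0:T}`: Borel measurable with linear growth. -/
def memB (φ : PathSpace K → ℝ) : Prop :=
  Measurable φ ∧ ∃ M : ℝ, ∀ x, |φ x| ≤ M * (1 + wt K x)

/-- Membership in `C_{0:t}`: continuous, growth controlled by the partial weight,
and depending only on the coordinates up to time `t`. -/
def memCto (t : Fin (T + 1)) (φ : PathSpace K → ℝ) : Prop :=
  Continuous φ ∧ (∃ M : ℝ, ∀ x, |φ x| ≤ M * (1 + wtTo K t x)) ∧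
    ∀ x y : PathSpace K, (∀ s, s ≤ t → x.1 s = y.1 s) → φ x = φ y

/-- The weighted sup-norm `‖φ‖_{0:T}`. -/
def wnorm (φ : PathSpace K → ℝ) : ℝ :=
  ⨆ x : PathSpace K, |φ x| / (1 + wt K x)

/-- The standing hypotheses of the general EMOT setting: closed nonempty factor sets,
vector subspaces `ℝ ⊆ E_t ⊆ C_{0:t}`, a proper concave functional `U` with `U(0) ∈ ℝ`,
and a convex cone `A ⊆ C_{0:T}` with `0 ∈ A`. -/
structure IsSetting
    (E : Fin (T + 1) → Set (PathSpace K → ℝ))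
    (U : (Fin (T + 1) → PathSpace K → ℝ) → EReal)
    (A : Set (PathSpace K → ℝ)) : Prop where
  K_nonempty : ∀ t j, (K t j).Nonempty
  K_closed : ∀ t j, IsClosed (K t j)
  E_subset : ∀ t, ∀ φ ∈ E t, memCto K t φ
  E_const : ∀ t (r : ℝ), (fun _ => r) ∈ E t
  E_add : ∀ t, ∀ φ ∈ E t, ∀ ψ ∈ E t, φ + ψ ∈ E t
  E_smul : ∀ t (r : ℝ), ∀ φ ∈ E t, r • φ ∈ E t
  U_ne_top : ∀ φ, (∀ t, φ t ∈ E t) → U φ ≠ ⊤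
  U_zero_real : U (fun _ _ => 0) ≠ ⊥
  U_concave : ∀ φ ψ, (∀ t, φ t ∈ E t) → (∀ t, ψ t ∈ E t) → ∀ a : ℝ, 0 ≤ a → a ≤ 1 →
    (a : EReal) * U φ + ((1 - a : ℝ) : EReal) * U ψ ≤
      U (fun t => a • φ t + (1 - a) • ψ t)
  A_subset : ∀ z ∈ A, memC K z
  A_zero : (fun _ => (0 : ℝ)) ∈ A
  A_add : ∀ z₁ ∈ A, ∀ z₂ ∈ A, z₁ + z₂ ∈ A
  A_smul : ∀ c : ℝ, 0 < c → ∀ z ∈ A, c • z ∈ A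

/-- Membership in `E = E_0 × … × E_T`. -/
def memE (E : Fin (T + 1) → Set (PathSpace K → ℝ))
    (φ : Fin (T + 1) → PathSpace K → ℝ) : Prop := ∀ t, φ t ∈ E t

/-- The generalized optimized certainty equivalent `S^U`. -/
def SU (U : (Fin (T + 1) → PathSpace K → ℝ) → EReal)
    (φ : Fin (T + 1) → PathSpace K → ℝ) : EReal :=
  ⨆ β : Fin (T + 1) → ℝ, (U (fun t x => φ t x + β t) - ((∑ t, β t : ℝ) : EReal))

/-- The set `Φ_z(c)` of subhedging static parts. -/
def Phi (E : Fin (T + 1) → Set (PathSpace K → ℝ))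
    (U : (Fin (T + 1) → PathSpace K → ℝ) → EReal)
    (z : PathSpace K → ℝ) (c : PathSpace K → EReal) :
    Set (Fin (T + 1) → PathSpace K → ℝ) :=
  { φ | memE K E φ ∧ SU K U φ ≠ ⊥ ∧
      ∀ x, (((∑ t, φ t x) + z x : ℝ) : EReal) ≤ c x }

/-- The primal (nonlinear subhedging) value `P(c)`, with the convention `sup ∅ = -∞`. -/
def P (E : Fin (T + 1) → Set (PathSpace K → ℝ))
    (U : (Fin (T + 1) → PathSpace K → ℝ) → EReal)
    (A : Set (PathSpace K → ℝ)) (c : PathSpace K → EReal) : EReal :=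
  ⨆ (z : PathSpace K → ℝ) (_ : -z ∈ A) (φ ∈ Phi K E U z c), SU K U φ

/-- `P` evaluated on a real-valued payoff. -/
def PB (E : Fin (T + 1) → Set (PathSpace K → ℝ))
    (U : (Fin (T + 1) → PathSpace K → ℝ) → EReal)
    (A : Set (PathSpace K → ℝ)) (c : PathSpace K → ℝ) : EReal :=
  P K E U A (fun x => ((c x : ℝ) : EReal))

/-- The penalization `D(Q)`, convex conjugate of `U`. -/
def D (E : Fin (T + 1) → Set (PathSpace K → ℝ))
    (U : (Fin (T + 1) → PathSpace K → ℝ) → EReal)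
    (Q : Measure (PathSpace K)) : EReal :=
  ⨆ (φ : Fin (T + 1) → PathSpace K → ℝ) (_ : memE K E φ),
    (U φ - ((∑ t, ∫ x, φ t x ∂Q : ℝ) : EReal))

/-- `Q ∈ Prob¹(Ω)`: a Borel probability measure integrating all coordinates. -/
def Prob1 (Q : Measure (PathSpace K)) : Prop :=
  IsProbabilityMeasure Q ∧ ∀ t j, Integrable (fun x : PathSpace K => x.1 t j) Q

/-- `Q ∈ A°`. -/
def inPolar (A : Set (PathSpace K → ℝ)) (Q : Measure (PathSpace K)) : Prop :=
  ∀ z ∈ A, ∫ x, z x ∂Q ≤ 0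

/-- `σ_A(Q) = sup_{z ∈ A} ∫ z dQ`. -/
def sigmaA (A : Set (PathSpace K → ℝ)) (Q : Measure (PathSpace K)) : EReal :=
  ⨆ (z : PathSpace K → ℝ) (_ : z ∈ A), ((∫ x, z x ∂Q : ℝ) : EReal)

/-- The growth/continuity assumption: there are compact sets `𝔎_t(n)` and nonnegative
functions `f_t^n ∈ E_t` dominating the weight off the compacts, with
`V(Γ f^n) = -U(-Γ f^n) → 0`. -/
def Growth (E : Fin (T + 1) → Set (PathSpace K → ℝ))
    (U : (Fin (T + 1) → PathSpace K → ℝ) → EReal) : Prop :=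
  ∃ (𝒦 : ℕ → Fin (T + 1) → Set (Fin d → ℝ)) (f : ℕ → Fin (T + 1) → PathSpace K → ℝ),
    (∀ n t, IsCompact (𝒦 n t)) ∧
    (∀ n t, f n t ∈ E t) ∧
    (∀ n t x, 0 ≤ f n t x) ∧
    (∀ n (x : PathSpace K), (¬ ∀ t, (fun j => x.1 t j) ∈ 𝒦 n t) →
      1 + wt K x ≤ ∑ t, f n t x) ∧
    (∀ Γ : ℝ, 0 < Γ →
      Tendsto (fun n => - U (fun t x => -(Γ * f n t x))) atTop (nhds (0 : EReal)))

/-- Admissible dynamic trading strategies `H^d`. -/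
def Adapted (Δ : Fin T → PathSpace K → Fin d → ℝ) : Prop :=
  ∀ t : Fin T, (∀ j, Continuous (fun x => Δ t x j)) ∧
    (∃ M : ℝ, ∀ x j, |Δ t x j| ≤ M) ∧
    (∀ x y : PathSpace K, (∀ s : Fin (T + 1), s ≤ t.castSucc → x.1 s = y.1 s) →
      Δ t x = Δ t y)

/-- The elementary stochastic integral `I^Δ`. -/
def stochInt (Δ : Fin T → PathSpace K → Fin d → ℝ) (x : PathSpace K) : ℝ :=
  ∑ t : Fin T, ∑ j, Δ t x j * (x.1 t.succ j - x.1 t.castSucc j)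

/-- Martingale measures: `Q ∈ Prob¹(Ω)` with `E_Q[I^Δ] = 0` for all `Δ ∈ H^d`. -/
def Mart (Q : Measure (PathSpace K)) : Prop :=
  Prob1 K Q ∧ ∀ Δ, Adapted K Δ → ∫ x, stochInt K Δ x ∂Q = 0

/-- The set of static parts of semistatic subhedging strategies for `c`. -/
def Ssub (E : Fin (T + 1) → Set (PathSpace K → ℝ))
    (U : (Fin (T + 1) → PathSpace K → ℝ) → EReal)
    (c : PathSpace K → EReal) : Set (Fin (T + 1) → PathSpace K → ℝ) :=
  { φ | memE K E φ ∧ SU K U φ ≠ ⊥ ∧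
      ∃ Δ, Adapted K Δ ∧ ∀ x, (((∑ t, φ t x) + stochInt K Δ x : ℝ) : EReal) ≤ c x }

/-- Linearity and norm-continuity of a functional on `C_{0:T}`. -/
def IsLinC (lam : (PathSpace K → ℝ) → ℝ) : Prop :=
  (∀ φ ψ, memC K φ → memC K ψ → lam (φ + ψ) = lam φ + lam ψ) ∧
  (∀ (r : ℝ) (φ : PathSpace K → ℝ), memC K φ → lam (r • φ) = r * lam φ) ∧
  (∃ M : ℝ, ∀ φ, memC K φ → |lam φ| ≤ M * wnorm K φ)

/-- Positivity of a functional on `C_{0:T}`. -/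
def IsPos (lam : (PathSpace K → ℝ) → ℝ) : Prop :=
  ∀ φ, memC K φ → (∀ x, 0 ≤ φ x) → 0 ≤ lam φ

/-- The convex conjugate `P*` of the primal functional `P`, on the dual of `C_{0:T}`. -/
def Pstar (E : Fin (T + 1) → Set (PathSpace K → ℝ))
    (U : (Fin (T + 1) → PathSpace K → ℝ) → EReal)
    (A : Set (PathSpace K → ℝ)) (lam : (PathSpace K → ℝ) → ℝ) : EReal :=
  ⨆ (c : PathSpace K → ℝ) (_ : memC K c), (PB K E U A c - ((lam c : ℝ) : EReal))

/-- The conjugate `(S^U)*(λ_0,…,λ_T)`, where `λ_t` is the restriction of `λ` to `C_{0:t}`. -/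
def SUstar (E : Fin (T + 1) → Set (PathSpace K → ℝ))
    (U : (Fin (T + 1) → PathSpace K → ℝ) → EReal)
    (lam : (PathSpace K → ℝ) → ℝ) : EReal :=
  ⨆ (φ : Fin (T + 1) → PathSpace K → ℝ) (_ : memE K E φ),
    (SU K U φ - ((∑ t, lam (φ t) : ℝ) : EReal))

/-- The penalization `D(λ_0,…,λ_T)` on dual elements. -/
def Dlam (E : Fin (T + 1) → Set (PathSpace K → ℝ))
    (U : (Fin (T + 1) → PathSpace K → ℝ) → EReal)
    (lam : (PathSpace K → ℝ) → ℝ) : EReal :=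
  ⨆ (φ : Fin (T + 1) → PathSpace K → ℝ) (_ : memE K E φ),
    (U φ - ((∑ t, lam (φ t) : ℝ) : EReal))

/-- The support function `σ_A(λ) = sup_{z ∈ A} λ(z)`. -/
def sigmaAlam (A : Set (PathSpace K → ℝ)) (lam : (PathSpace K → ℝ) → ℝ) : EReal :=
  ⨆ (z : PathSpace K → ℝ) (_ : z ∈ A), ((lam z : ℝ) : EReal)

/-- The weak topology `σ((C_{0:T})*, C_{0:T})` restricted to measures: the topology
generated by the evaluation maps `Q ↦ ∫ φ dQ`, `φ ∈ C_{0:T}`. -/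
def weakTop : TopologicalSpace (Measure (PathSpace K)) :=
  TopologicalSpace.induced
    (fun Q => fun φ : {φ : PathSpace K → ℝ // memC K φ} => ∫ x, φ.1 x ∂Q)
    inferInstance
section Aux
variable {K}

lemma ereal_le_of_forall_real_lt {x y : EReal}
    (h : ∀ s : ℝ, (s : EReal) < x → (s : EReal) ≤ y) : x ≤ y := by
  by_contra h'
  push_neg at h'
  obtain ⟨s, hys, hsx⟩ := EReal.lt_iff_exists_real_btwn.mp h'
  exact absurd (h s hsx) (not_le.mpr hys)

lemma wt_nonneg (x : PathSpace K) : 0 ≤ wt K x :=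
  Finset.sum_nonneg fun _ _ => Finset.sum_nonneg fun _ _ => abs_nonneg _

lemma g_pos (x : PathSpace K) : (0:ℝ) < 1 + wt K x := by linarith [wt_nonneg x]

lemma wt_continuous : Continuous (fun x : PathSpace K => wt K x) := by
  refine continuous_finset_sum _ fun t _ => continuous_finset_sum _ fun j _ => ?_
  exact ((continuous_apply j).comp ((continuous_apply t).comp continuous_subtype_val)).abs

lemma memC_const (r : ℝ) : memC K (fun _ => r) := by
  refine ⟨continuous_const, |r|, fun x => ?_⟩
  have := g_pos x
  nlinarith [abs_nonneg r, wt_nonneg x]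

lemma memC_zero : memC K (0 : PathSpace K → ℝ) := memC_const 0

lemma memC_add {φ ψ : PathSpace K → ℝ} (h : memC K φ) (h' : memC K ψ) :
    memC K (φ + ψ) := by
  obtain ⟨hc, M, hM⟩ := h
  obtain ⟨hc', M', hM'⟩ := h'
  refine ⟨hc.add hc', M + M', fun x => ?_⟩
  calc |(φ + ψ) x| ≤ |φ x| + |ψ x| := abs_add_le _ _
    _ ≤ M * (1 + wt K x) + M' * (1 + wt K x) := add_le_add (hM x) (hM' x)
    _ = (M + M') * (1 + wt K x) := by ring

lemma memC_smul {φ : PathSpace K → ℝ} (r : ℝ) (h : memC K φ) :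
    memC K (r • φ) := by
  obtain ⟨hc, M, hM⟩ := h
  refine ⟨hc.const_smul r, |r| * M, fun x => ?_⟩
  have : |(r • φ) x| = |r| * |φ x| := by simp [abs_mul]
  rw [this, mul_assoc]
  exact mul_le_mul_of_nonneg_left (hM x) (abs_nonneg r)

lemma memC_neg {φ : PathSpace K → ℝ} (h : memC K φ) : memC K (-φ) := by
  have := memC_smul (-1) h
  simpa using this

lemma memC_sub {φ ψ : PathSpace K → ℝ} (h : memC K φ) (h' : memC K ψ) :
    memC K (φ - ψ) := by
  have := memC_add h (memC_neg h')
  simpa [sub_eq_add_neg] using this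

lemma wnorm_bddAbove {φ : PathSpace K → ℝ} (h : memC K φ) :
    BddAbove (Set.range fun x : PathSpace K => |φ x| / (1 + wt K x)) := by
  obtain ⟨_, M, hM⟩ := h
  refine ⟨max M 0, fun y hy => ?_⟩
  obtain ⟨x, rfl⟩ := hy
  have hg := g_pos x
  rw [div_le_iff₀ hg]
  exact (hM x).trans (mul_le_mul_of_nonneg_right (le_max_left _ _) hg.le)

lemma abs_le_wnorm {φ : PathSpace K → ℝ} (h : memC K φ) (x : PathSpace K) :
    |φ x| ≤ wnorm K φ * (1 + wt K x) := by
  have := le_ciSup (wnorm_bddAbove h) x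
  rw [div_le_iff₀ (g_pos x)] at this
  exact this

lemma wnorm_le {φ : PathSpace K → ℝ} {M : ℝ} (hM : 0 ≤ M)
    (h : ∀ x, |φ x| ≤ M * (1 + wt K x)) : wnorm K φ ≤ M :=
  Real.iSup_le (fun x => (div_le_iff₀ (g_pos x)).mpr (h x)) hM

lemma wnorm_nonneg (φ : PathSpace K → ℝ) : 0 ≤ wnorm K φ :=
  Real.iSup_nonneg fun x => div_nonneg (abs_nonneg _) (g_pos x).le

end Aux

/-- The space `C_{0:T}` as a type, carrying the weighted sup norm topology. -/
structure CW (K : Fin (T + 1) → Fin d → Set ℝ) where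
  toFun : PathSpace K → ℝ
  mem' : memC K toFun

namespace CW
variable {K}

@[ext] lemma ext {x y : CW K} (h : x.toFun = y.toFun) : x = y := by
  cases x; cases y; simpa using h

instance : Zero (CW K) := ⟨⟨0, memC_zero⟩⟩
instance : Add (CW K) := ⟨fun x y => ⟨x.toFun + y.toFun, memC_add x.mem' y.mem'⟩⟩
instance : Neg (CW K) := ⟨fun x => ⟨-x.toFun, memC_neg x.mem'⟩⟩
instance : Sub (CW K) := ⟨fun x y => ⟨x.toFun - y.toFun, memC_sub x.mem' y.mem'⟩⟩
instance : SMul ℝ (CW K) := ⟨fun r x => ⟨r • x.toFun, memC_smul r x.mem'⟩⟩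
instance : SMul ℕ (CW K) := ⟨fun n x => ⟨(n : ℝ) • x.toFun, memC_smul _ x.mem'⟩⟩
instance : SMul ℤ (CW K) := ⟨fun n x => ⟨(n : ℝ) • x.toFun, memC_smul _ x.mem'⟩⟩

lemma toFun_injective : Function.Injective (toFun (K := K)) := fun _ _ h => ext h

instance : AddCommGroup (CW K) :=
  toFun_injective.addCommGroup toFun rfl (fun _ _ => rfl) (fun _ => rfl) (fun _ _ => rfl)
    (fun x n => by
      show (((n : ℝ)) • x.toFun) = n • x.toFun
      funext pt; simp)
    (fun x n => by
      show (((n : ℝ)) • x.toFun) = n • x.toFun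
      funext pt; simp)

def toFunHom : CW K →+ (PathSpace K → ℝ) :=
  { toFun := toFun, map_zero' := rfl, map_add' := fun _ _ => rfl }

instance : Module ℝ (CW K) :=
  toFun_injective.module ℝ toFunHom (fun _ _ => rfl)

noncomputable instance : NormedAddCommGroup (CW K) :=
  AddGroupNorm.toNormedAddCommGroup
    { toFun := fun x => wnorm K x.toFun
      map_zero' := le_antisymm
        (wnorm_le le_rfl (fun x => by
          rw [show (0 : CW K).toFun = 0 from rfl]; simp)) (wnorm_nonneg _)
      add_le' := fun x y => by
        refine wnorm_le (add_nonneg (wnorm_nonneg _) (wnorm_nonneg _)) (fun pt => ?_)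
        calc |(x.toFun + y.toFun) pt| ≤ |x.toFun pt| + |y.toFun pt| := abs_add_le _ _
          _ ≤ wnorm K x.toFun * (1 + wt K pt) + wnorm K y.toFun * (1 + wt K pt) :=
              add_le_add (abs_le_wnorm x.mem' pt) (abs_le_wnorm y.mem' pt)
          _ = (wnorm K x.toFun + wnorm K y.toFun) * (1 + wt K pt) := by ring
      neg' := fun x => by
        show wnorm K (-x.toFun) = wnorm K x.toFun
        unfold wnorm; congr 1; funext pt; simp
      eq_zero_of_map_eq_zero' := fun x hx => by
        have hx' : wnorm K x.toFun = 0 := hx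
        refine ext (funext fun pt => ?_)
        have := abs_le_wnorm x.mem' pt
        rw [hx', zero_mul] at this
        have h0 := abs_nonpos_iff.mp this
        rw [h0]; rfl }

lemma norm_def (x : CW K) : ‖x‖ = wnorm K x.toFun := rfl

noncomputable instance : NormedSpace ℝ (CW K) := by
  refine ⟨fun r x => ?_⟩
  rw [norm_def, norm_def]
  show wnorm K (r • x.toFun) ≤ ‖r‖ * wnorm K x.toFun
  refine wnorm_le (mul_nonneg (norm_nonneg r) (wnorm_nonneg _)) (fun pt => ?_)
  have : |(r • x.toFun) pt| = |r| * |x.toFun pt| := by simp [abs_mul]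
  rw [this, Real.norm_eq_abs, mul_assoc]
  exact mul_le_mul_of_nonneg_left (abs_le_wnorm x.mem' pt) (abs_nonneg r)

lemma toFun_add (x y : CW K) : (x + y).toFun = x.toFun + y.toFun := rfl
lemma toFun_smul (r : ℝ) (x : CW K) : (r • x).toFun = r • x.toFun := rfl
lemma toFun_sub (x y : CW K) : (x - y).toFun = x.toFun - y.toFun := rfl

end CW


section PBLemmas

variable {K}
variable {E : Fin (T + 1) → Set (PathSpace K → ℝ)}
  {U : (Fin (T + 1) → PathSpace K → ℝ) → EReal}
  {A : Set (PathSpace K → ℝ)}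

lemma PB_witness (hS : IsSetting K E U A) {c : PathSpace K → ℝ} {s : ℝ}
    (h : (s : EReal) < PB K E U A c) :
    ∃ (z : PathSpace K → ℝ) (φ : Fin (T + 1) → PathSpace K → ℝ)
      (β : Fin (T + 1) → ℝ) (u : ℝ),
      -z ∈ A ∧ memE K E φ ∧ (∀ x, (∑ t, φ t x) + z x ≤ c x) ∧
      U (fun t x => φ t x + β t) = (u : EReal) ∧ s < u - ∑ t, β t := by
  unfold PB P at h
  obtain ⟨z, h⟩ := lt_iSup_iff.mp h
  obtain ⟨hz, h⟩ := lt_iSup_iff.mp h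
  obtain ⟨φ, h⟩ := lt_iSup_iff.mp h
  obtain ⟨hφ, h⟩ := lt_iSup_iff.mp h
  obtain ⟨hmem, hne, hcon⟩ := hφ
  rw [SU] at h
  obtain ⟨β, h⟩ := lt_iSup_iff.mp h
  have hEshift : ∀ t, (fun x => φ t x + β t) ∈ E t := fun t =>
    hS.E_add t _ (hmem t) _ (hS.E_const t (β t))
  have hnetop : U (fun t x => φ t x + β t) ≠ ⊤ := hS.U_ne_top _ hEshift
  have hnebot : U (fun t x => φ t x + β t) ≠ ⊥ := by
    intro hbot
    rw [hbot] at h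
    simp at h
  refine ⟨z, φ, β, (U (fun t x => φ t x + β t)).toReal, hz, hmem,
    fun x => EReal.coe_le_coe_iff.mp (hcon x), (EReal.coe_toReal hnetop hnebot).symm, ?_⟩
  rw [← EReal.coe_toReal hnetop hnebot, ← EReal.coe_sub] at h
  exact EReal.coe_lt_coe_iff.mp h

lemma PB_ge (hS : IsSetting K E U A) {c z : PathSpace K → ℝ}
    {φ : Fin (T + 1) → PathSpace K → ℝ} {β : Fin (T + 1) → ℝ} {u : ℝ}
    (hz : -z ∈ A) (hφ : memE K E φ)
    (hcon : ∀ x, (∑ t, φ t x) + z x ≤ c x)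
    (hu : (u : EReal) ≤ U (fun t x => φ t x + β t)) :
    ((u - ∑ t, β t : ℝ) : EReal) ≤ PB K E U A c := by
  have hSU : ((u - ∑ t, β t : ℝ) : EReal) ≤ SU K U φ := by
    rw [SU]
    refine le_trans ?_ (le_iSup _ β)
    rw [EReal.coe_sub, sub_eq_add_neg, sub_eq_add_neg]
    exact add_le_add_left hu _
  have hnb : SU K U φ ≠ ⊥ := by
    intro hb
    rw [hb] at hSU
    exact (EReal.coe_ne_bot _) (le_bot_iff.mp hSU)
  have hmem : φ ∈ Phi K E U z (fun x => ((c x : ℝ) : EReal)) :=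
    ⟨hφ, hnb, fun x => EReal.coe_le_coe_iff.mpr (hcon x)⟩
  refine hSU.trans ?_
  unfold PB P
  exact le_iSup_of_le z (le_iSup_of_le hz (le_iSup_of_le φ (le_iSup_of_le hmem le_rfl)))

lemma PB_mono (hS : IsSetting K E U A) {c₁ c₂ : PathSpace K → ℝ}
    (h : ∀ x, c₁ x ≤ c₂ x) : PB K E U A c₁ ≤ PB K E U A c₂ := by
  refine ereal_le_of_forall_real_lt fun s hs => ?_
  obtain ⟨z, φ, β, u, hz, hφ, hcon, hU, hlt⟩ := PB_witness hS hs
  exact (EReal.coe_le_coe_iff.mpr hlt.le).trans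
    (PB_ge hS hz hφ (fun x => (hcon x).trans (h x)) hU.ge)

lemma PB_shift_witness (hS : IsSetting K E U A) {c : PathSpace K → ℝ} (r : ℝ) {s : ℝ}
    (h : (s : EReal) < PB K E U A c) :
    ((s + r : ℝ) : EReal) ≤ PB K E U A (fun x => c x + r) := by
  obtain ⟨z, φ, β, u, hz, hφ, hcon, hU, hlt⟩ := PB_witness hS h
  set δ : Fin (T + 1) → ℝ := fun t => if t = 0 then r else 0 with hδ
  have hδsum : ∑ t, δ t = r := by simp [hδ]
  have hφ' : memE K E (fun t x => φ t x + δ t) := fun t =>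
    hS.E_add t _ (hφ t) _ (hS.E_const t (δ t))
  have hcon' : ∀ x, (∑ t, (φ t x + δ t)) + z x ≤ c x + r := by
    intro x
    rw [Finset.sum_add_distrib, hδsum]
    linarith [hcon x]
  have hUeq : U (fun t x => (φ t x + δ t) + (β t - δ t)) = (u : EReal) := by
    rw [show (fun t x => (φ t x + δ t) + (β t - δ t)) = fun t x => φ t x + β t by
      funext t x; ring]
    exact hU
  have := PB_ge (c := fun x => c x + r) hS hz hφ' hcon' (β := fun t => β t - δ t) hUeq.ge
  refine le_trans ?_ this
  rw [EReal.coe_le_coe_iff, Finset.sum_sub_distrib, hδsum]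
  linarith

lemma PB_combo (hS : IsSetting K E U A) {a : ℝ} (ha : 0 < a) (ha' : a < 1)
    {c₁ c₂ : PathSpace K → ℝ} {r₁ r₂ : ℝ}
    (h₁ : (r₁ : EReal) < PB K E U A c₁) (h₂ : (r₂ : EReal) < PB K E U A c₂) :
    ((a * r₁ + (1 - a) * r₂ : ℝ) : EReal) ≤
      PB K E U A (fun x => a * c₁ x + (1 - a) * c₂ x) := by
  obtain ⟨z₁, φ₁, β₁, u₁, hz₁, hφ₁, hcon₁, hU₁, hlt₁⟩ := PB_witness hS h₁
  obtain ⟨z₂, φ₂, β₂, u₂, hz₂, hφ₂, hcon₂, hU₂, hlt₂⟩ := PB_witness hS h₂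
  have hb : (0:ℝ) < 1 - a := by linarith
  set z : PathSpace K → ℝ := fun x => a * z₁ x + (1 - a) * z₂ x with hzdef
  set φ : Fin (T + 1) → PathSpace K → ℝ :=
    fun t x => a * φ₁ t x + (1 - a) * φ₂ t x with hφdef
  set β : Fin (T + 1) → ℝ := fun t => a * β₁ t + (1 - a) * β₂ t with hβdef
  have hz : -z ∈ A := by
    have : -z = a • (-z₁) + (1 - a) • (-z₂) := by
      funext x; simp [hzdef]; ring
    rw [this]
    exact hS.A_add _ (hS.A_smul a ha _ hz₁) _ (hS.A_smul _ hb _ hz₂)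
  have hφ : memE K E φ := by
    intro t
    have : φ t = a • φ₁ t + (1 - a) • φ₂ t := by
      funext x; simp [hφdef]
    rw [this]
    exact hS.E_add t _ (hS.E_smul t a _ (hφ₁ t)) _ (hS.E_smul t _ _ (hφ₂ t))
  have hcon : ∀ x, (∑ t, φ t x) + z x ≤ a * c₁ x + (1 - a) * c₂ x := by
    intro x
    have hsum : ∑ t, φ t x = a * (∑ t, φ₁ t x) + (1 - a) * (∑ t, φ₂ t x) := by
      rw [Finset.mul_sum, Finset.mul_sum, ← Finset.sum_add_distrib]
    have hzx : z x = a * z₁ x + (1 - a) * z₂ x := rfl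
    rw [hsum, hzx]
    have e₁ := mul_le_mul_of_nonneg_left (hcon₁ x) ha.le
    have e₂ := mul_le_mul_of_nonneg_left (hcon₂ x) hb.le
    nlinarith [e₁, e₂]
  -- concavity of U
  have hψ₁ : ∀ t, (fun x => φ₁ t x + β₁ t) ∈ E t := fun t =>
    hS.E_add t _ (hφ₁ t) _ (hS.E_const t (β₁ t))
  have hψ₂ : ∀ t, (fun x => φ₂ t x + β₂ t) ∈ E t := fun t =>
    hS.E_add t _ (hφ₂ t) _ (hS.E_const t (β₂ t))
  have hconc := hS.U_concave (fun t x => φ₁ t x + β₁ t) (fun t x => φ₂ t x + β₂ t)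
    hψ₁ hψ₂ a ha.le ha'.le
  rw [hU₁, hU₂] at hconc
  have hfun : (fun t => a • (fun x => φ₁ t x + β₁ t) + (1 - a) • (fun x => φ₂ t x + β₂ t))
      = fun t x => φ t x + β t := by
    funext t x
    simp [hφdef, hβdef]
    ring
  rw [hfun] at hconc
  have hcoe : ((a * u₁ + (1 - a) * u₂ : ℝ) : EReal) ≤ U (fun t x => φ t x + β t) := by
    refine le_trans (le_of_eq ?_) hconc
    rw [EReal.coe_add, EReal.coe_mul, EReal.coe_mul]
  have := PB_ge (c := fun x => a * c₁ x + (1 - a) * c₂ x) hS hz hφ hcon hcoe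
  refine le_trans ?_ this
  rw [EReal.coe_le_coe_iff]
  have hβsum : ∑ t, β t = a * (∑ t, β₁ t) + (1 - a) * (∑ t, β₂ t) := by
    rw [hβdef]
    rw [Finset.mul_sum, Finset.mul_sum, ← Finset.sum_add_distrib]
  rw [hβsum]
  have e₁ := mul_le_mul_of_nonneg_left hlt₁.le ha.le
  have e₂ := mul_le_mul_of_nonneg_left hlt₂.le hb.le
  nlinarith [e₁, e₂]

end PBLemmas


section Finiteness

variable {K}
variable {E : Fin (T + 1) → Set (PathSpace K → ℝ)}
  {U : (Fin (T + 1) → PathSpace K → ℝ) → EReal}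
  {A : Set (PathSpace K → ℝ)}

lemma memC_g : memC K (fun x => 1 + wt K x) := by
  refine ⟨continuous_const.add wt_continuous, 1, fun x => ?_⟩
  have := g_pos x
  rw [abs_of_pos this, one_mul]

lemma PB_lower (hS : IsSetting K E U A) (hG : Growth K E U) {Γ : ℝ} (hΓ : 0 < Γ) :
    ∃ B : ℝ, ∀ c : PathSpace K → ℝ,
      (∀ x, -(Γ * (1 + wt K x)) ≤ c x) → (B : EReal) ≤ PB K E U A c := by
  obtain ⟨𝒦, f, hcomp, hfE, hf0, hdom, htend⟩ := hG
  obtain ⟨n, hn⟩ := ((htend Γ hΓ).eventually_lt_const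
      (show (0:EReal) < 1 by norm_num)).exists
  have hψE : ∀ t, (fun x => -(Γ * f n t x)) ∈ E t := by
    intro t
    have hfun : (fun x => -(Γ * f n t x)) = (-Γ) • f n t := by
      funext x; simp [Pi.smul_apply]; try ring
    rw [hfun]
    exact hS.E_smul t _ _ (hfE n t)
  have hnetop : U (fun t x => -(Γ * f n t x)) ≠ ⊤ := hS.U_ne_top _ hψE
  have hnebot : U (fun t x => -(Γ * f n t x)) ≠ ⊥ := by
    intro hb
    rw [hb, EReal.neg_bot] at hn
    exact not_top_lt hn
  set u₀ := (U (fun t x => -(Γ * f n t x))).toReal with hu₀def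
  have hUeq : U (fun t x => -(Γ * f n t x)) = (u₀ : EReal) :=
    (EReal.coe_toReal hnetop hnebot).symm
  have hu₀ : (-1 : ℝ) < u₀ := by
    rw [hUeq] at hn
    have h2 := EReal.neg_lt_of_neg_lt hn
    have h3 : ((-1 : ℝ) : EReal) < ((u₀ : ℝ) : EReal) := by
      rw [EReal.coe_neg, EReal.coe_one]; exact h2
    exact EReal.coe_lt_coe_iff.mp h3
  -- compact bound
  have hclosed : IsClosed {y : Fin (T + 1) → Fin d → ℝ | ∀ t j, y t j ∈ K t j} := by
    have hset : {y : Fin (T + 1) → Fin d → ℝ | ∀ t j, y t j ∈ K t j}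
        = ⋂ t, ⋂ j, (fun y : Fin (T + 1) → Fin d → ℝ => y t j) ⁻¹' (K t j) := by
      ext y; simp [Set.mem_iInter]
    rw [hset]
    exact isClosed_iInter fun t => isClosed_iInter fun j =>
      (hS.K_closed t j).preimage ((continuous_apply j).comp (continuous_apply t))
  set Cn : Set (PathSpace K) := {x | ∀ t, x.1 t ∈ 𝒦 n t} with hCndef
  have hCnim : Subtype.val '' Cn =
      (Set.univ.pi fun t => 𝒦 n t) ∩ {y | ∀ t j, y t j ∈ K t j} := by
    ext y
    constructor
    · rintro ⟨x, hx, rfl⟩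
      exact ⟨fun t _ => hx t, x.2⟩
    · rintro ⟨h1, h2⟩
      exact ⟨⟨y, h2⟩, fun t => h1 t (Set.mem_univ t), rfl⟩
  have hCn : IsCompact Cn := by
    rw [Subtype.isCompact_iff, hCnim]
    exact (isCompact_univ_pi fun t => hcomp n t).inter_right hclosed
  obtain ⟨κ₀, hκ₀⟩ := hCn.bddAbove_image
    ((continuous_const.add wt_continuous).continuousOn (s := Cn))
  set κ := max κ₀ 0 with hκdef
  have hκ : ∀ x ∈ Cn, 1 + wt K x ≤ κ := fun x hx =>
    le_trans (hκ₀ (Set.mem_image_of_mem _ hx)) (le_max_left _ _)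
  have hκ0 : 0 ≤ κ := le_max_right _ _
  set k := Γ * κ / (T + 1 : ℝ) with hkdef
  have hT1 : (0:ℝ) < (T + 1 : ℝ) := by positivity
  have hsumk : ∑ _t : Fin (T + 1), k = Γ * κ := by
    rw [Finset.sum_const, Finset.card_univ, Fintype.card_fin, nsmul_eq_mul, hkdef]
    field_simp
    push_cast; ring
  refine ⟨u₀ - Γ * κ, fun c hc => ?_⟩
  have hcon : ∀ x, (∑ t, (-(Γ * f n t x) - k)) + (fun _ : PathSpace K => (0:ℝ)) x ≤ c x := by
    intro x
    show (∑ t, (-(Γ * f n t x) - k)) + 0 ≤ c x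
    rw [add_zero]
    have hsum : ∑ t, (-(Γ * f n t x) - k) = -(Γ * ∑ t, f n t x) - Γ * κ := by
      rw [Finset.sum_sub_distrib, hsumk, Finset.sum_neg_distrib, ← Finset.mul_sum]
    rw [hsum]
    by_cases hx : ∀ t, x.1 t ∈ 𝒦 n t
    · have h1 := hκ x hx
      have h2 : 0 ≤ Γ * ∑ t, f n t x :=
        mul_nonneg hΓ.le (Finset.sum_nonneg fun t _ => hf0 n t x)
      have h3 := hc x
      have h4 : Γ * (1 + wt K x) ≤ Γ * κ := mul_le_mul_of_nonneg_left h1 hΓ.le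
      linarith
    · have h1 := hdom n x hx
      have h2 : Γ * (1 + wt K x) ≤ Γ * ∑ t, f n t x := mul_le_mul_of_nonneg_left h1 hΓ.le
      have h3 := hc x
      have h4 : 0 ≤ Γ * κ := mul_nonneg hΓ.le hκ0
      linarith
  have hzA : -(fun _ : PathSpace K => (0:ℝ)) ∈ A := by
    have hz0 : -(fun _ : PathSpace K => (0:ℝ)) = fun _ => (0:ℝ) := by funext x; simp
    rw [hz0]
    exact hS.A_zero
  have hφE : memE K E (fun t x => -(Γ * f n t x) - k) := by
    intro t
    show (fun x => -(Γ * f n t x) - k) ∈ E t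
    have hfun : (fun x => -(Γ * f n t x) - k) = ((-Γ) • f n t) + (fun _ => -k) := by
      funext x; simp [Pi.smul_apply]; try ring
    rw [hfun]
    exact hS.E_add t _ (hS.E_smul t _ _ (hfE n t)) _ (hS.E_const t _)
  have hUeq2 : U (fun t x => (-(Γ * f n t x) - k) + (fun _ : Fin (T+1) => k) t) = (u₀ : EReal) := by
    rw [show (fun t x => (-(Γ * f n t x) - k) + (fun _ : Fin (T+1) => k) t)
        = fun t x => -(Γ * f n t x) by funext t x; simp]
    exact hUeq
  have hge := PB_ge (c := c) hS hzA hφE hcon hUeq2.ge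
  refine le_trans ?_ hge
  rw [EReal.coe_le_coe_iff, hsumk]

lemma PB_ne_top (hS : IsSetting K E U A) (hG : Growth K E U)
    {chat : PathSpace K → ℝ} (hchat : memB K chat) (hfin : PB K E U A chat ≠ ⊤)
    {c : PathSpace K → ℝ} (hc : memC K c) : PB K E U A c ≠ ⊤ := by
  obtain ⟨Mc, hMc⟩ := hc.2
  obtain ⟨Mh, hMh⟩ := hchat.2
  set M₁ := max Mc 1 with hM₁def
  set M₂ := max Mh 1 with hM₂def
  have hM₁ : (0:ℝ) < M₁ := lt_of_lt_of_le one_pos (le_max_right _ _)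
  have hM₂ : (0:ℝ) < M₂ := lt_of_lt_of_le one_pos (le_max_right _ _)
  have hΓ : (0:ℝ) < 2 * M₂ + M₁ := by linarith
  obtain ⟨B, hB⟩ := PB_lower hS hG hΓ
  intro htop
  have h2 : ((B - 1 : ℝ) : EReal) <
      PB K E U A (fun x => -((2 * M₂ + M₁) * (1 + wt K x))) := by
    refine lt_of_lt_of_le ?_ (hB _ (fun x => le_refl _))
    exact EReal.coe_lt_coe_iff.mpr (by linarith)
  have htopg : PB K E U A (fun x => M₁ * (1 + wt K x)) = ⊤ := by
    rw [← top_le_iff, ← htop]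
    refine PB_mono hS (fun x => ?_)
    have h5 := hMc x
    have hg := g_pos x
    have h6 : c x ≤ |c x| := le_abs_self _
    have h7 : Mc * (1 + wt K x) ≤ M₁ * (1 + wt K x) :=
      mul_le_mul_of_nonneg_right (le_max_left _ _) hg.le
    linarith
  have key : ∀ r₁ : ℝ,
      ((1/2 * r₁ + (1 - 1/2) * (B - 1) : ℝ) : EReal) ≤ PB K E U A chat := by
    intro r₁
    have h1 : ((r₁ : ℝ) : EReal) < PB K E U A (fun x => M₁ * (1 + wt K x)) := by
      rw [htopg]; exact EReal.coe_lt_top r₁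
    have hcombo := PB_combo hS (by norm_num : (0:ℝ) < 1/2) (by norm_num) h1 h2
    refine hcombo.trans ?_
    have hfeq : (fun x => 1/2 * (M₁ * (1 + wt K x)) +
        (1 - 1/2) * (-((2 * M₂ + M₁) * (1 + wt K x))))
        = fun x => -(M₂ * (1 + wt K x)) := by
      funext x; ring
    rw [hfeq]
    refine PB_mono hS (fun x => ?_)
    have h5 := hMh x
    have hg := g_pos x
    have h7 : Mh * (1 + wt K x) ≤ M₂ * (1 + wt K x) :=
      mul_le_mul_of_nonneg_right (le_max_left _ _) hg.le
    have h8 : -|chat x| ≤ chat x := neg_abs_le _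
    linarith
  by_cases hbot : PB K E U A chat = ⊥
  · have hk := key 0
    rw [hbot, le_bot_iff] at hk
    exact EReal.coe_ne_bot _ hk
  · set m := (PB K E U A chat).toReal with hmdef
    have hm : PB K E U A chat = (m : EReal) := (EReal.coe_toReal hfin hbot).symm
    have hk := key (2 * m + 2 - (B - 1))
    rw [hm, EReal.coe_le_coe_iff] at hk
    linarith

lemma PB_ne_bot (hS : IsSetting K E U A) (hG : Growth K E U)
    {c : PathSpace K → ℝ} (hc : memC K c) : PB K E U A c ≠ ⊥ := by
  obtain ⟨Mc, hMc⟩ := hc.2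
  have hΓ : (0:ℝ) < max Mc 0 + 1 := by
    have := le_max_right Mc 0; linarith
  obtain ⟨B, hB⟩ := PB_lower hS hG hΓ
  have hcge : ∀ x, -((max Mc 0 + 1) * (1 + wt K x)) ≤ c x := fun x => by
    have h1 := hMc x
    have hg := g_pos x
    have h4 : -|c x| ≤ c x := neg_abs_le _
    have h2 : Mc * (1 + wt K x) ≤ (max Mc 0 + 1) * (1 + wt K x) :=
      mul_le_mul_of_nonneg_right (by linarith [le_max_left Mc 0]) hg.le
    linarith
  have hle := hB c hcge
  intro hbot
  rw [hbot, le_bot_iff] at hle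
  exact EReal.coe_ne_bot _ hle

end Finiteness


section RealLevel

variable {K}
variable {E : Fin (T + 1) → Set (PathSpace K → ℝ)}
  {U : (Fin (T + 1) → PathSpace K → ℝ) → EReal}
  {A : Set (PathSpace K → ℝ)}
  {chat : PathSpace K → ℝ}

/-- The (finite) real value of `P` on `C_{0:T}`. -/
def preal (K : Fin (T + 1) → Fin d → Set ℝ) (E : Fin (T + 1) → Set (PathSpace K → ℝ))
    (U : (Fin (T + 1) → PathSpace K → ℝ) → EReal) (A : Set (PathSpace K → ℝ))
    (c : PathSpace K → ℝ) : ℝ := (PB K E U A c).toReal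

lemma preal_rep (hS : IsSetting K E U A) (hG : Growth K E U)
    (hchat : memB K chat) (hfin : PB K E U A chat ≠ ⊤)
    {c : PathSpace K → ℝ} (hc : memC K c) :
    PB K E U A c = ((preal K E U A c : ℝ) : EReal) :=
  (EReal.coe_toReal (PB_ne_top hS hG hchat hfin hc) (PB_ne_bot hS hG hc)).symm

lemma preal_mono (hS : IsSetting K E U A) (hG : Growth K E U)
    (hchat : memB K chat) (hfin : PB K E U A chat ≠ ⊤)
    {c₁ c₂ : PathSpace K → ℝ} (hc₁ : memC K c₁) (hc₂ : memC K c₂)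
    (h : ∀ x, c₁ x ≤ c₂ x) : preal K E U A c₁ ≤ preal K E U A c₂ :=
  EReal.toReal_le_toReal (PB_mono hS h) (PB_ne_bot hS hG hc₁)
    (PB_ne_top hS hG hchat hfin hc₂)

lemma memC_shift {c : PathSpace K → ℝ} (hc : memC K c) (r : ℝ) :
    memC K (fun x => c x + r) := by
  have h := memC_add hc (memC_const r)
  have he : (fun x => c x + r) = c + (fun _ => r) := by funext x; rfl
  rw [he]
  exact h

lemma preal_cash (hS : IsSetting K E U A) (hG : Growth K E U)
    (hchat : memB K chat) (hfin : PB K E U A chat ≠ ⊤)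
    {c : PathSpace K → ℝ} (hc : memC K c) (r : ℝ) :
    preal K E U A (fun x => c x + r) = preal K E U A c + r := by
  have hc' : memC K (fun x => c x + r) := memC_shift hc r
  have h1 : ∀ s : ℝ, s < preal K E U A c → s + r ≤ preal K E U A (fun x => c x + r) := by
    intro s hs
    have hs' : (s : EReal) < PB K E U A c := by
      rw [preal_rep hS hG hchat hfin hc]
      exact_mod_cast hs
    have := PB_shift_witness hS r hs'
    rw [preal_rep hS hG hchat hfin hc'] at this
    exact_mod_cast this
  have h2 : ∀ s : ℝ, s < preal K E U A (fun x => c x + r) → s - r ≤ preal K E U A c := by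
    intro s hs
    have hs' : (s : EReal) < PB K E U A (fun x => c x + r) := by
      rw [preal_rep hS hG hchat hfin hc']
      exact_mod_cast hs
    have hshift := PB_shift_witness hS (-r) hs'
    have hfeq : (fun x => (fun x => c x + r) x + -r) = c := by funext x; ring
    rw [hfeq, preal_rep hS hG hchat hfin hc] at hshift
    have : s + -r ≤ preal K E U A c := by exact_mod_cast hshift
    linarith
  have hle1 : preal K E U A c + r ≤ preal K E U A (fun x => c x + r) := by
    by_contra hcon
    push_neg at hcon
    have hgap : 0 < (preal K E U A c + r) - preal K E U A (fun x => c x + r) := by linarith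
    have := h1 (preal K E U A c - ((preal K E U A c + r) -
      preal K E U A (fun x => c x + r)) / 2) (by linarith)
    linarith
  have hle2 : preal K E U A (fun x => c x + r) ≤ preal K E U A c + r := by
    by_contra hcon
    push_neg at hcon
    have := h2 (preal K E U A (fun x => c x + r) - (preal K E U A (fun x => c x + r) -
      (preal K E U A c + r)) / 2) (by linarith)
    linarith
  linarith

lemma preal_concave (hS : IsSetting K E U A) (hG : Growth K E U)
    (hchat : memB K chat) (hfin : PB K E U A chat ≠ ⊤)
    {a : ℝ} (ha : 0 < a) (ha' : a < 1)
    {c₁ c₂ : PathSpace K → ℝ} (hc₁ : memC K c₁) (hc₂ : memC K c₂) :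
    a * preal K E U A c₁ + (1 - a) * preal K E U A c₂ ≤
      preal K E U A (fun x => a * c₁ x + (1 - a) * c₂ x) := by
  have hcc : memC K (fun x => a * c₁ x + (1 - a) * c₂ x) := by
    have h := memC_add (memC_smul a hc₁) (memC_smul (1 - a) hc₂)
    have he : (fun x => a * c₁ x + (1 - a) * c₂ x) = a • c₁ + (1 - a) • c₂ := by
      funext x; simp [Pi.smul_apply]
    rw [he]
    exact h
  have key : ∀ r₁ r₂ : ℝ, r₁ < preal K E U A c₁ → r₂ < preal K E U A c₂ →
      a * r₁ + (1 - a) * r₂ ≤ preal K E U A (fun x => a * c₁ x + (1 - a) * c₂ x) := by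
    intro r₁ r₂ hr₁ hr₂
    have h₁ : (r₁ : EReal) < PB K E U A c₁ := by
      rw [preal_rep hS hG hchat hfin hc₁]; exact_mod_cast hr₁
    have h₂ : (r₂ : EReal) < PB K E U A c₂ := by
      rw [preal_rep hS hG hchat hfin hc₂]; exact_mod_cast hr₂
    have := PB_combo hS ha ha' h₁ h₂
    rw [preal_rep hS hG hchat hfin hcc] at this
    exact_mod_cast this
  by_contra hcon
  push_neg at hcon
  set P₀ := preal K E U A (fun x => a * c₁ x + (1 - a) * c₂ x) with hP₀
  set gap := (a * preal K E U A c₁ + (1 - a) * preal K E U A c₂) - P₀ with hgap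
  have hgappos : 0 < gap := by linarith
  have := key (preal K E U A c₁ - gap / 2) (preal K E U A c₂ - gap / 2)
    (by linarith) (by linarith)
  nlinarith

lemma preal_lsc (hS : IsSetting K E U A) (hG : Growth K E U)
    (hchat : memB K chat) (hfin : PB K E U A chat ≠ ⊤)
    {c₀ : PathSpace K → ℝ} (hc₀ : memC K c₀) {δ : ℝ} (hδ : 0 < δ) :
    ∃ ε > 0, ∀ c' : PathSpace K → ℝ, memC K c' →
      (∀ x, c₀ x - ε * (1 + wt K x) ≤ c' x) →
      preal K E U A c₀ - δ < preal K E U A c' := by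
  obtain ⟨M₀, hM₀⟩ := hc₀.2
  set Γ := max M₀ 0 + 1 with hΓdef
  have hΓ : (0:ℝ) < Γ := by
    have := le_max_right M₀ 0; rw [hΓdef]; linarith
  obtain ⟨B, hB⟩ := PB_lower hS hG hΓ
  set D := preal K E U A c₀ - (B - 1) with hDdef
  clear_value D
  set θ := min (1/2 : ℝ) (δ / (2 * (|D| + 1))) with hθdef
  clear_value θ
  have hθpos : 0 < θ := by
    rw [hθdef]; exact lt_min (by norm_num) (by positivity)
  have hθlt : θ < 1 := by
    rw [hθdef]; exact lt_of_le_of_lt (min_le_left _ _) (by norm_num)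
  have hθD : θ * D < δ := by
    have h1 : θ ≤ δ / (2 * (|D| + 1)) := by rw [hθdef]; exact min_le_right _ _
    have h2 : D ≤ |D| := le_abs_self D
    have habs : 0 ≤ |D| := abs_nonneg D
    rcases le_or_gt D 0 with h | h
    · nlinarith
    · have h3 : θ * D ≤ (δ / (2 * (|D| + 1))) * D := mul_le_mul_of_nonneg_right h1 h.le
      have h4 : (δ / (2 * (|D| + 1))) * D < δ := by
        rw [div_mul_eq_mul_div, div_lt_iff₀ (by positivity)]
        nlinarith
      linarith
  refine ⟨θ, hθpos, fun c' hc' hge => ?_⟩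
  have hc₂ : ∀ x, -(Γ * (1 + wt K x)) ≤ c₀ x - (1 + wt K x) := fun x => by
    have h1 := hM₀ x
    have hg := g_pos x
    have h4 : -|c₀ x| ≤ c₀ x := neg_abs_le _
    have h2 : M₀ * (1 + wt K x) ≤ (max M₀ 0) * (1 + wt K x) :=
      mul_le_mul_of_nonneg_right (le_max_left _ _) hg.le
    have h3 : Γ * (1 + wt K x) = (max M₀ 0) * (1 + wt K x) + (1 + wt K x) := by
      rw [hΓdef]; ring
    linarith
  have h₂ : ((B - 1 : ℝ) : EReal) < PB K E U A (fun x => c₀ x - (1 + wt K x)) :=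
    lt_of_lt_of_le (EReal.coe_lt_coe_iff.mpr (by linarith)) (hB _ hc₂)
  have key : ∀ r₁ : ℝ, r₁ < preal K E U A c₀ →
      (1 - θ) * r₁ + θ * (B - 1) ≤ preal K E U A c' := by
    intro r₁ hr₁
    have h₁ : (r₁ : EReal) < PB K E U A c₀ := by
      rw [preal_rep hS hG hchat hfin hc₀]; exact_mod_cast hr₁
    have hcombo := PB_combo hS (a := 1 - θ) (by linarith) (by linarith) h₁ h₂
    have hfeq : (fun x => (1 - θ) * c₀ x + (1 - (1 - θ)) * (c₀ x - (1 + wt K x)))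
        = fun x => c₀ x - θ * (1 + wt K x) := by
      funext x; ring
    rw [hfeq] at hcombo
    have hmono := PB_mono hS (c₁ := fun x => c₀ x - θ * (1 + wt K x)) (c₂ := c')
      (fun x => by show c₀ x - θ * (1 + wt K x) ≤ c' x; exact hge x)
    have hfin' := hcombo.trans hmono
    rw [preal_rep hS hG hchat hfin hc'] at hfin'
    have : (1 - θ) * r₁ + (1 - (1 - θ)) * (B - 1) ≤ preal K E U A c' := by
      exact_mod_cast hfin'
    linarith
  have hfinal : (1 - θ) * preal K E U A c₀ + θ * (B - 1) ≤ preal K E U A c' := by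
    by_contra hcon
    push_neg at hcon
    set gap := (1 - θ) * preal K E U A c₀ + θ * (B - 1) - preal K E U A c' with hgap
    have hgappos : 0 < gap := by linarith
    have := key (preal K E U A c₀ - gap) (by linarith)
    nlinarith
  have hid : (1 - θ) * preal K E U A c₀ + θ * (B - 1)
      = preal K E U A c₀ - θ * D := by rw [hDdef]; ring
  linarith [hθD, hfinal, hid]

end RealLevel

/-- Lemma `propdualrepre`: if `P(ĉ) < +∞` for some `ĉ ∈ B_{0:T}`, then
for every `c ∈ C_{0:T}`,
`P(c) = min { λ(c) + P*(λ) : λ ∈ (C_{0:T})*, λ ≥ 0, λ(1) = 1 }`, the minimum being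
attained. -/
theorem P_fenchel_moreau_representation
    {T d : ℕ} (hT : 1 ≤ T) (hd : 1 ≤ d)
    (K : Fin (T + 1) → Fin d → Set ℝ)
    (E : Fin (T + 1) → Set (PathSpace K → ℝ))
    (U : (Fin (T + 1) → PathSpace K → ℝ) → EReal)
    (A : Set (PathSpace K → ℝ))
    (hS : IsSetting K E U A) (hG : Growth K E U)
    (chat : PathSpace K → ℝ) (hchat : memB K chat)
    (hfin : PB K E U A chat ≠ ⊤)
    (c : PathSpace K → ℝ) (hc : memC K c) :
    (PB K E U A c =
      ⨅ (lam : (PathSpace K → ℝ) → ℝ)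
        (_ : IsLinC K lam ∧ IsPos K lam ∧ lam (fun _ => 1) = 1),
        (((lam c : ℝ) : EReal) + Pstar K E U A lam)) ∧
    (∃ lam : (PathSpace K → ℝ) → ℝ,
      (IsLinC K lam ∧ IsPos K lam ∧ lam (fun _ => 1) = 1) ∧
      ((lam c : ℝ) : EReal) + Pstar K E U A lam = PB K E U A c) := by
  classical
  -- the real value of P on C
  set pr : (PathSpace K → ℝ) → ℝ := preal K E U A with hprdef
  have hrep : ∀ {c' : PathSpace K → ℝ}, memC K c' →
      PB K E U A c' = ((pr c' : ℝ) : EReal) := fun hc' =>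
    preal_rep hS hG hchat hfin hc'
  -- the separation space
  set S : Set (CW K × ℝ) := {q | q.2 < pr q.1.toFun} with hSdef
  have hSconv : Convex ℝ S := by
    rintro q hq q' hq' a b ha hb hab
    rcases eq_or_lt_of_le ha with rfl | ha0
    · have hb1 : b = 1 := by linarith
      subst hb1
      simpa using hq'
    rcases eq_or_lt_of_le hb with rfl | hb0
    · have ha1 : a = 1 := by linarith
      subst ha1
      simpa using hq
    have ha1 : a < 1 := by linarith
    show (a • q + b • q').2 < pr (a • q + b • q').1.toFun
    have hfst : (a • q + b • q').1 = a • q.1 + b • q'.1 := rfl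
    have hsnd : (a • q + b • q').2 = a * q.2 + b * q'.2 := rfl
    rw [hfst, hsnd]
    have htf : (a • q.1 + b • q'.1).toFun
        = fun x => a * q.1.toFun x + b * q'.1.toFun x := by
      funext x
      show a • q.1.toFun x + b • q'.1.toFun x = _
      simp
    rw [htf]
    have hb' : b = 1 - a := by linarith
    subst hb'
    have hconc := preal_concave hS hG hchat hfin ha0 ha1 q.1.mem' q'.1.mem'
    have hlt1 : a * q.2 < a * pr q.1.toFun := by
      exact mul_lt_mul_of_pos_left hq ha0
    have hlt2 : (1 - a) * q'.2 < (1 - a) * pr q'.1.toFun :=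
      mul_lt_mul_of_pos_left hq' hb0
    calc a * q.2 + (1 - a) * q'.2
        < a * pr q.1.toFun + (1 - a) * pr q'.1.toFun := by linarith
      _ ≤ _ := hconc
  have hSopen : IsOpen S := by
    rw [Metric.isOpen_iff]
    rintro ⟨x₀, r₀⟩ hq
    have hδ₀ : 0 < pr x₀.toFun - r₀ := by
      have : r₀ < pr x₀.toFun := hq
      linarith
    set δ₀ := pr x₀.toFun - r₀ with hδ₀def
    obtain ⟨ε₀, hε₀pos, hε₀⟩ := preal_lsc hS hG hchat hfin x₀.mem' (half_pos hδ₀)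
    refine ⟨min ε₀ (δ₀ / 2), lt_min hε₀pos (half_pos hδ₀), ?_⟩
    rintro ⟨x, r⟩ hball
    rw [Metric.mem_ball, Prod.dist_eq] at hball
    have hd1 : dist x x₀ < min ε₀ (δ₀ / 2) := lt_of_le_of_lt (le_max_left _ _) hball
    have hd2 : dist r r₀ < min ε₀ (δ₀ / 2) := lt_of_le_of_lt (le_max_right _ _) hball
    have hxnorm : wnorm K (x.toFun - x₀.toFun) ≤ ε₀ := by
      have h1 : dist x x₀ = wnorm K (x - x₀).toFun := by rw [dist_eq_norm]; rfl
      rw [CW.toFun_sub] at h1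
      rw [← h1]
      exact le_trans hd1.le (min_le_left _ _)
    have hpt : ∀ pt, x₀.toFun pt - ε₀ * (1 + wt K pt) ≤ x.toFun pt := by
      intro pt
      have h2 := abs_le_wnorm (memC_sub x.mem' x₀.mem') pt
      have h3 : wnorm K (x.toFun - x₀.toFun) * (1 + wt K pt) ≤ ε₀ * (1 + wt K pt) :=
        mul_le_mul_of_nonneg_right hxnorm (g_pos pt).le
      have h4 : |x.toFun pt - x₀.toFun pt| ≤ ε₀ * (1 + wt K pt) := by
        have h5 : (x.toFun - x₀.toFun) pt = x.toFun pt - x₀.toFun pt := rfl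
        rw [h5] at h2
        linarith
      have := abs_le.mp h4
      linarith [this.1]
    have hplow := hε₀ x.toFun x.mem' hpt
    show r < pr x.toFun
    have hr : r < r₀ + δ₀ / 2 := by
      have h6 := abs_lt.mp (lt_of_lt_of_le hd2 (min_le_right _ _))
      linarith [h6.2]
    have : pr x₀.toFun - δ₀ / 2 = r₀ + δ₀ / 2 := by rw [hδ₀def]; ring
    linarith
  set xc : CW K := ⟨c, hc⟩ with hxc
  have hnotin : (xc, pr c) ∉ S := by
    show ¬ (pr c < pr (xc.toFun))
    exact lt_irrefl _
  obtain ⟨F, hF⟩ := geometric_hahn_banach_open_point hSconv hSopen hnotin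
  -- decomposition of F
  set α := F ((0 : CW K), (1 : ℝ)) with hα
  set L : CW K → ℝ := fun x => F (x, 0) with hL
  have hdec : ∀ (x : CW K) (r : ℝ), F (x, r) = L x + r * α := by
    intro x r
    have hxr : (x, r) = ((x, (0:ℝ)) + r • ((0 : CW K), (1:ℝ))) := by
      have : (x, (0:ℝ)) + r • ((0 : CW K), (1:ℝ)) = (x + r • 0, 0 + r * 1) := rfl
      rw [this]
      simp
    rw [hxr, map_add, _root_.map_smul, smul_eq_mul]
  have hαpos : 0 < α := by
    have hmem1 : (xc, pr c - 1) ∈ S := by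
      show pr c - 1 < pr xc.toFun
      have : xc.toFun = c := rfl
      rw [this]
      linarith
    have hlt := hF _ hmem1
    rw [hdec, hdec] at hlt
    have hcc : xc.toFun = c := rfl
    nlinarith [hlt]
  -- the subgradient inequality
  have hsub : ∀ x : CW K, L x + α * pr x.toFun ≤ L xc + α * pr c := by
    intro x
    by_contra hcon
    push_neg at hcon
    set gap := L x + α * pr x.toFun - (L xc + α * pr c) with hgap
    have hgappos : 0 < gap := by linarith
    have hγpos : 0 < gap / (2 * α) := by positivity
    have hmem : (x, pr x.toFun - gap / (2 * α)) ∈ S := by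
      show pr x.toFun - gap / (2 * α) < pr x.toFun
      linarith
    have hlt := hF _ hmem
    rw [hdec, hdec] at hlt
    have hαγ : (pr x.toFun - gap / (2 * α)) * α = pr x.toFun * α - gap / 2 := by
      field_simp
    linarith [hlt, hαγ]
  -- the dual functional
  set lam : (PathSpace K → ℝ) → ℝ :=
    fun φ => if h : memC K φ then -(L ⟨φ, h⟩) / α else 0 with hlam
  have lam_eq : ∀ (φ : PathSpace K → ℝ) (h : memC K φ), lam φ = -(L ⟨φ, h⟩) / α := by
    intro φ h
    rw [hlam]
    exact dif_pos h
  have hLadd : ∀ x y : CW K, L (x + y) = L x + L y := by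
    intro x y
    have : ((x + y : CW K), (0:ℝ)) = (x, (0:ℝ)) + (y, (0:ℝ)) := by
      have h1 : (x, (0:ℝ)) + (y, (0:ℝ)) = (x + y, (0:ℝ) + 0) := rfl
      rw [h1]; norm_num
    rw [hL]
    show F ((x + y : CW K), (0:ℝ)) = F (x, 0) + F (y, 0)
    rw [this, map_add]
  have hLsmul : ∀ (r : ℝ) (x : CW K), L (r • x) = r * L x := by
    intro r x
    have : ((r • x : CW K), (0:ℝ)) = r • (x, (0:ℝ)) := by
      have h1 : r • ((x : CW K), (0:ℝ)) = (r • x, r * 0) := rfl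
      rw [h1]; norm_num
    rw [hL]
    show F ((r • x : CW K), (0:ℝ)) = r * F (x, 0)
    rw [this, _root_.map_smul, smul_eq_mul]
  have hLbound : ∀ x : CW K, |L x| ≤ ‖F‖ * ‖x‖ := by
    intro x
    have h1 : |F (x, (0:ℝ))| ≤ ‖F‖ * ‖((x : CW K), (0:ℝ))‖ := by
      have := F.le_opNorm (x, (0:ℝ))
      rwa [Real.norm_eq_abs] at this
    have h2 : ‖((x : CW K), (0:ℝ))‖ = ‖x‖ := by
      rw [Prod.norm_def]
      simp [norm_nonneg]
    rw [hL]
    show |F (x, 0)| ≤ ‖F‖ * ‖x‖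
    rw [← h2]
    exact h1
  have hlam_add : ∀ φ ψ, memC K φ → memC K ψ → lam (φ + ψ) = lam φ + lam ψ := by
    intro φ ψ h h'
    rw [lam_eq _ h, lam_eq _ h', lam_eq _ (memC_add h h')]
    have he : (⟨φ + ψ, memC_add h h'⟩ : CW K) = ⟨φ, h⟩ + ⟨ψ, h'⟩ := by
      apply CW.ext; rfl
    rw [he, hLadd]
    ring
  have hlam_smul : ∀ (r : ℝ) (φ : PathSpace K → ℝ), memC K φ → lam (r • φ) = r * lam φ := by
    intro r φ h
    rw [lam_eq _ h, lam_eq _ (memC_smul r h)]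
    have he : (⟨r • φ, memC_smul r h⟩ : CW K) = r • ⟨φ, h⟩ := by
      apply CW.ext; rfl
    rw [he, hLsmul]
    ring
  have hlam_bdd : ∀ φ, memC K φ → |lam φ| ≤ (‖F‖ / α) * wnorm K φ := by
    intro φ h
    rw [lam_eq _ h]
    have h1 := hLbound ⟨φ, h⟩
    have h2 : ‖(⟨φ, h⟩ : CW K)‖ = wnorm K φ := rfl
    rw [h2] at h1
    rw [abs_div, abs_neg, abs_of_pos hαpos, div_le_iff₀ hαpos]
    calc |L ⟨φ, h⟩| ≤ ‖F‖ * wnorm K φ := h1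
      _ = ‖F‖ / α * wnorm K φ * α := by field_simp
  have hIsLin : IsLinC K lam := by
    refine ⟨hlam_add, hlam_smul, ‖F‖ / α, fun φ h => hlam_bdd φ h⟩
  -- subgradient inequality in terms of lam
  have hsubg : ∀ c', memC K c' → pr c' ≤ pr c + lam c' - lam c := by
    intro c' hc'
    have h1 := hsub ⟨c', hc'⟩
    have h2 : (⟨c', hc'⟩ : CW K).toFun = c' := rfl
    rw [h2] at h1
    rw [lam_eq _ hc', lam_eq _ hc]
    have h3 : (⟨c, hc⟩ : CW K) = xc := rfl
    rw [h3]
    have h4 : pr c + (-(L ⟨c', hc'⟩) / α) - (-(L xc) / α)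
        = pr c + (L xc - L ⟨c', hc'⟩) / α := by ring
    rw [h4]
    have h5 : α * pr c' ≤ α * pr c + (L xc - L ⟨c', hc'⟩) := by linarith
    have h6 : α * (pr c + (L xc - L ⟨c', hc'⟩) / α) = α * pr c + (L xc - L ⟨c', hc'⟩) := by
      field_simp
    exact (mul_le_mul_iff_right₀ hαpos).mp (by rw [h6]; exact h5)
  -- positivity
  have hIsPos : IsPos K lam := by
    intro φ hφ hφ0
    have hc' : memC K (fun x => c x + φ x) := by
      have he : (fun x => c x + φ x) = c + φ := by funext x; rfl
      rw [he]
      exact memC_add hc hφ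
    have hmono : pr c ≤ pr (fun x => c x + φ x) :=
      preal_mono hS hG hchat hfin hc hc' (fun x => by have := hφ0 x; linarith)
    have h1 := hsubg _ hc'
    have h2 : lam (fun x => c x + φ x) = lam c + lam φ := by
      have he : (fun x => c x + φ x) = c + φ := by funext x; rfl
      rw [he]
      exact hlam_add c φ hc hφ
    rw [h2] at h1
    linarith
  -- normalization
  have hlam_one : lam (fun _ => (1:ℝ)) = 1 := by
    have hone : memC K (fun _ : PathSpace K => (1:ℝ)) := memC_const 1
    have hup : memC K (fun x => c x + 1) := memC_shift hc 1
    have hdown : memC K (fun x => c x + (-1)) := memC_shift hc (-1)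
    have hcash1 : pr (fun x => c x + 1) = pr c + 1 :=
      preal_cash hS hG hchat hfin hc 1
    have hcash2 : pr (fun x => c x + (-1)) = pr c + (-1) :=
      preal_cash hS hG hchat hfin hc (-1)
    have h1 := hsubg _ hup
    have h2 := hsubg _ hdown
    have he1 : (fun x => c x + 1) = c + (fun _ => (1:ℝ)) := by funext x; rfl
    have he2 : (fun x => c x + (-1)) = c + (fun _ => (-1:ℝ)) := by funext x; rfl
    have hl1 : lam (fun x => c x + 1) = lam c + lam (fun _ => (1:ℝ)) := by
      rw [he1]; exact hlam_add _ _ hc hone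
    have hneg : (fun _ : PathSpace K => (-1:ℝ)) = (-1 : ℝ) • (fun _ => (1:ℝ)) := by
      funext x; simp
    have hl2 : lam (fun x => c x + (-1)) = lam c - lam (fun _ => (1:ℝ)) := by
      rw [he2, hlam_add _ _ hc (by rw [hneg]; exact memC_smul _ hone), hneg,
        hlam_smul _ _ hone]
      ring
    rw [hcash1, hl1] at h1
    rw [hcash2, hl2] at h2
    linarith
  -- the value of Pstar at lam
  have hPstar : Pstar K E U A lam = ((pr c - lam c : ℝ) : EReal) := by
    apply le_antisymm
    · rw [Pstar]
      refine iSup_le fun c' => iSup_le fun hc' => ?_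
      rw [hrep hc', ← EReal.coe_sub]
      exact EReal.coe_le_coe_iff.mpr (by have := hsubg c' hc'; linarith)
    · rw [Pstar]
      refine le_iSup_of_le c (le_iSup_of_le hc ?_)
      rw [hrep hc, ← EReal.coe_sub]
  have hattain : ((lam c : ℝ) : EReal) + Pstar K E U A lam = PB K E U A c := by
    rw [hPstar, ← EReal.coe_add, hrep hc]
    exact congrArg _ (by ring)
  constructor
  · apply le_antisymm
    · refine le_iInf fun lam' => le_iInf fun hl' => ?_
      obtain ⟨hlin', hpos', hone'⟩ := hl'
      have h1 : PB K E U A c - ((lam' c : ℝ) : EReal) ≤ Pstar K E U A lam' := by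
        rw [Pstar]
        exact le_iSup_of_le c (le_iSup_of_le hc le_rfl)
      rw [hrep hc, ← EReal.coe_sub] at h1
      calc PB K E U A c = ((pr c : ℝ) : EReal) := hrep hc
        _ = ((lam' c : ℝ) : EReal) + ((pr c - lam' c : ℝ) : EReal) := by
            rw [← EReal.coe_add]
            exact congrArg _ (by ring)
        _ ≤ ((lam' c : ℝ) : EReal) + Pstar K E U A lam' := add_le_add_right h1 _
    · exact iInf_le_of_le lam (iInf_le_of_le ⟨hIsLin, hIsPos, hlam_one⟩ (le_of_eq hattain))
  · exact ⟨lam, ⟨hIsLin, hIsPos, hlam_one⟩, hattain⟩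


end EMOT
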